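/- arXiv:1202.2013 — 6 statements merged into one kernel-verified Lean document; each statement's English description precedes it below -/
import Mathlib

section
/- Let v₁, …, vₙ ∈ ℤⁿ be vectors that are linearly independent over ℝ. Then every integer point x ∈ ℤⁿ lying in the cone C = {μ₁v₁ + ⋯ + μₙvₙ : μᵢ ∈ ℝ, μᵢ ≥ 0} can be written uniquely in the form x = w + a₁v₁ + ⋯ + aₙvₙ, where a₁, …, aₙ are nonnegative integers and w is an integer point of the half-open fundamental parallelepiped Π = {μ₁v₁ + ⋯ + μₙvₙ : 0 ≤ μᵢ < 1}. -/
/-!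
By linear independence, the coefficients `μ` of `x` in the basis `v` are unique. A decomposition
`x = w + Σ aᵢ vᵢ` with `w = Σ νᵢ vᵢ` has coefficients `ν + a`, so necessarily `aᵢ = ⌊μᵢ⌋` and
`νᵢ = μᵢ - ⌊μᵢ⌋`; conversely these choices work, and `w = x - Σ aᵢ vᵢ` is an integer point.
-/

open Finset

theorem Nat.floor_add_natCast_of_lt_one {K : Type*} [Semiring K] [LinearOrder K]
    [IsStrictOrderedRing K] [FloorSemiring K] {ν : K} (h₀ : 0 ≤ ν) (h₁ : ν < 1)
    (a : ℕ) : ⌊ν + a⌋₊ = a := by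
  rw [Nat.floor_add_natCast h₀, Nat.floor_eq_zero.mpr h₁, zero_add]

theorem cast_eq_sum_mul_iff_cast_add_eq_sum_mul {ι K : Type*} [Fintype ι] [Ring K]
    (v : ι → ℤ) (w : ℤ) (ν : ι → K) (a : ι → ℕ) :
    (w : K) = ∑ i, ν i * v i ↔
      ((w + ∑ i, (a i : ℤ) * v i : ℤ) : K) = ∑ i, (ν i + a i) * v i := by
  push_cast
  simp only [add_mul, sum_add_distrib, add_left_inj]

theorem LinearIndependent.eq_of_sum_mul_apply_eq {ι κ K : Type*} [Fintype ι] [Semiring K]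
    {v : ι → κ → K} (hv : LinearIndependent K v) {μ₁ μ₂ : ι → K}
    (h : ∀ j, ∑ i, μ₁ i * v i j = ∑ i, μ₂ i * v i j) : μ₁ = μ₂ :=
  funext <| Fintype.linearIndependent_iffₛ.mp hv μ₁ μ₂ <| by
    ext j
    simpa only [Finset.sum_apply, Pi.smul_apply, smul_eq_mul] using h j

/-- Every integer point of the simplicial cone generated by linearly
independent integer vectors `v₁, …, vₙ` is uniquely `w + Σ aᵢ vᵢ` with `aᵢ ∈ ℕ`
and `w` an integer point of the half-open fundamental parallelepiped. -/
theorem fundamental_parallelepiped_decomposition (n : ℕ)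
    (v : Fin n → Fin n → ℤ)
    (hv : LinearIndependent ℝ (fun i => fun j => (v i j : ℝ)))
    (x : Fin n → ℤ)
    (hx : ∃ μ : Fin n → ℝ, (∀ i, 0 ≤ μ i) ∧ ∀ j, (x j : ℝ) = ∑ i, μ i * (v i j : ℝ)) :
    ∃! wa : (Fin n → ℤ) × (Fin n → ℕ),
      (∃ μ : Fin n → ℝ, (∀ i, 0 ≤ μ i ∧ μ i < 1) ∧
          ∀ j, (wa.1 j : ℝ) = ∑ i, μ i * (v i j : ℝ)) ∧
      x = fun j => wa.1 j + ∑ i, (wa.2 i : ℤ) * v i j := by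
  obtain ⟨μ, hμ₀, hμx⟩ := hx
  set a : Fin n → ℕ := fun i => ⌊μ i⌋₊
  refine ⟨(fun j => x j - ∑ i, (a i : ℤ) * v i j, a),
    ⟨⟨fun i => μ i - a i, fun i => ⟨?_, ?_⟩, fun j => ?_⟩, by simp⟩, ?_⟩
  · simpa using Nat.floor_le (hμ₀ i)
  · simpa using sub_lt_iff_lt_add'.mpr (Nat.lt_floor_add_one (μ i))
  · refine (cast_eq_sum_mul_iff_cast_add_eq_sum_mul _ _ _ a).mpr ?_
    simpa only [sub_add_cancel] using hμx j
  · rintro ⟨w, b⟩ ⟨⟨ν, hν, hνw⟩, rfl⟩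
    have hμν : μ = fun i => ν i + b i := hv.eq_of_sum_mul_apply_eq fun j => by
      rw [← hμx j, (cast_eq_sum_mul_iff_cast_add_eq_sum_mul _ _ _ b).mp (hνw j)]
    have hab : a = b := funext fun i => by
      simp only [a, hμν, Nat.floor_add_natCast_of_lt_one (hν i).1 (hν i).2]
    subst hab
    simp
end

section
/- Let n ≥ 1 and let T be a tree (a connected acyclic simple graph) on the vertex set {0, 1, …, n} in which vertex n is a leaf (has degree 1). Let Lₙ be the n×n matrix obtained from the Laplacian matrix of T by deleting the row and column indexed by n, and let d denote graph distance in T. Define the rational n×n matrix B by B_{i,j} = (d(n,i) + d(n,j) − d(i,j))/2 for 0 ≤ i, j ≤ n−1. Then Lₙ·B = I; that is, Lₙ is invertible and the (i,j) entry of Lₙ⁻¹ equals (d(n,i) + d(n,j) − d(i,j))/2, which is the distance from n to the path connecting vertices i and j, equivalently the length of the intersection of the path from n to i with the path from n to j. -/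
/-!
Write `d_t` for the vector `v ↦ d(t, v)`. In a tree every vertex `i ≠ t` has exactly one
neighbour one step closer to `t`, all its other neighbours being one step further, so
`L d_t = 2 - deg - 2 e_t`. The column `v ↦ (d(t,v) + d(t,j) - d(v,j)) / 2` is
`(d_t + d(t,j) - d_j) / 2` and `L` kills constants, hence `L` maps it to `e_j - e_t`.
This column vanishes at `t`, so deleting row and column `t` leaves `L_t B = 1`.
-/

lemma Matrix.submatrix_castSucc_mul_submatrix_castSucc {α m l : Type*}
    [NonUnitalNonAssocSemiring α] {n : ℕ} (A : Matrix m (Fin (n + 1)) α)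
    (B : Matrix (Fin (n + 1)) l α) (hB : ∀ j, B (Fin.last n) j = 0) {m' l' : Type*}
    (e₁ : m' → m) (e₂ : l' → l) :
    A.submatrix e₁ Fin.castSucc * B.submatrix Fin.castSucc e₂ =
      (A * B).submatrix e₁ e₂ := by
  ext i j
  simp [Matrix.mul_apply, Fin.sum_univ_castSucc, hB]

namespace SimpleGraph

open Finset Matrix

variable {V : Type*} {G : SimpleGraph V}

lemma IsAcyclic.eq_penultimate_of_adj_of_dist_add_one_eq (hG : G.IsAcyclic) {u v w : V}
    {p : G.Walk u v} (hp : p.IsPath) (hadj : G.Adj v w) (hd : G.dist u w + 1 = G.dist u v) :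
    w = p.penultimate := by
  classical
  obtain ⟨q, hq, hql⟩ := (p.reachable.trans hadj.reachable).exists_path_of_dist
  have hv : v ∉ q.support := fun hmem => by
    have hle := G.dist_le (q.takeUntil v hmem)
    have hlen := q.length_takeUntil_le_length hmem
    omega
  exact hG.eq_penultimate_of_adj_end hp hadj
    (hG.mem_support_of_ne_mem_support_of_adj_of_isPath hp hq hadj hv)

lemma IsTree.existsUnique_adj_dist_add_one_eq (hG : G.IsTree) {t i : V} (hne : i ≠ t) :
    ∃! k, G.Adj i k ∧ G.dist t k + 1 = G.dist t i := by
  obtain ⟨p, hp, hpl⟩ := (hG.connected t i).exists_path_of_dist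
  have hnil : ¬p.Nil := Walk.not_nil_of_ne hne.symm
  refine ⟨p.penultimate, ⟨(p.adj_penultimate hnil).symm, ?_⟩, fun k ⟨hk, hkd⟩ =>
    hG.isAcyclic.eq_penultimate_of_adj_of_dist_add_one_eq hp hk hkd⟩
  have hle := G.dist_le p.dropLast
  have hlen := p.length_dropLast_add_one hnil
  have hstep := hG.dist_eq_dist_add_one_of_adj t (p.adj_penultimate hnil)
  omega

variable [Fintype V] [DecidableEq V] [DecidableRel G.Adj]

lemma IsTree.sum_neighborFinset_dist_sub {R : Type*} [Ring R] (hG : G.IsTree) (t i : V) :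
    ∑ k ∈ G.neighborFinset i, ((G.dist t i : R) - G.dist t k) =
      2 - G.degree i - 2 * if i = t then 1 else 0 := by
  by_cases hit : i = t
  · subst hit
    have hterm : ∀ k ∈ G.neighborFinset i, ((G.dist i i : R) - G.dist i k) = -1 := by
      intro k hk
      rw [dist_self, dist_eq_one_iff_adj.mpr ((G.mem_neighborFinset i k).mp hk)]
      simp
    rw [sum_congr rfl hterm, sum_const, card_neighborFinset_eq_degree, if_pos rfl]
    simp only [nsmul_eq_mul, mul_neg, mul_one]
    abel
  obtain ⟨k₀, ⟨hk₀, hk₀d⟩, hk₀u⟩ := hG.existsUnique_adj_dist_add_one_eq hit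
  have hterm : ∀ k ∈ G.neighborFinset i,
      ((G.dist t i : R) - G.dist t k) = (if k = k₀ then 2 else 0) - 1 := by
    intro k hk
    have hk : G.Adj i k := (G.mem_neighborFinset i k).mp hk
    split_ifs with hkk₀
    · subst hkk₀
      rw [← hk₀d]; push_cast; norm_num
    · obtain hd | hd := hG.dist_eq_dist_add_one_of_adj t hk
      · exact absurd (hk₀u k ⟨hk, hd.symm⟩) hkk₀
      · rw [hd]; push_cast; norm_num
  rw [sum_congr rfl hterm, sum_sub_distrib, sum_ite_eq' _ _ _,
    if_pos ((G.mem_neighborFinset i k₀).mpr hk₀), sum_const, card_neighborFinset_eq_degree,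
    if_neg hit]
  simp

theorem IsTree.lapMatrix_mulVec_dist {R : Type*} [Ring R] (hG : G.IsTree) (t i : V) :
    (G.lapMatrix R *ᵥ fun v => (G.dist t v : R)) i =
      2 - G.degree i - 2 * if i = t then 1 else 0 := by
  rw [lapMatrix_mulVec_apply, ← hG.sum_neighborFinset_dist_sub t i, sum_sub_distrib, sum_const,
    card_neighborFinset_eq_degree, nsmul_eq_mul]

lemma submatrix_lapMatrix (R : Type*) [Ring R] {ι : Type*} [DecidableEq ι] {f : ι → V}
    (hf : Function.Injective f) :
    (G.lapMatrix R).submatrix f f =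
      of fun i j =>
        if i = j then (G.degree (f i) : R) else if G.Adj (f i) (f j) then -1 else 0 := by
  ext i j
  by_cases hij : i = j
  · subst hij; simp [lapMatrix, degMatrix]
  · by_cases hadj : G.Adj (f i) (f j) <;> simp [lapMatrix, degMatrix, hij, hf.ne hij, hadj]

variable (R : Type*) [Field R]

noncomputable def gromovProduct (G : SimpleGraph V) (t i j : V) : R :=
  ((G.dist t i : R) + G.dist t j - G.dist i j) / 2

variable {R}

theorem IsTree.lapMatrix_mul_gromovProduct_apply [NeZero (2 : R)] (hG : G.IsTree) (t i j : V) :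
    (G.lapMatrix R * of (G.gromovProduct R t)) i j =
      (1 : Matrix V V R) i j - if i = t then 1 else 0 := by
  have hcol : (fun v => G.gromovProduct R t v j) = (2⁻¹ : R) •
      ((fun v => (G.dist t v : R)) + (G.dist t j : R) • (fun _ => 1) -
        fun v => (G.dist j v : R)) := by
    ext v
    simp only [gromovProduct, dist_comm (u := v), Pi.smul_apply, Pi.add_apply, Pi.sub_apply,
      smul_eq_mul, mul_one]
    ring
  change (G.lapMatrix R *ᵥ fun v => G.gromovProduct R t v j) i = _
  rw [hcol, mulVec_smul, mulVec_sub, mulVec_add, mulVec_smul, lapMatrix_mulVec_const_eq_zero]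
  simp only [Pi.smul_apply, Pi.sub_apply, smul_zero, add_zero, smul_eq_mul, one_apply]
  rw [hG.lapMatrix_mulVec_dist, hG.lapMatrix_mulVec_dist]
  linear_combination ((if i = j then 1 else 0) - (if i = t then 1 else 0) : R) *
    (inv_mul_cancel₀ (two_ne_zero : (2 : R) ≠ 0))

end SimpleGraph

theorem tree_laplacian_minor_inverse_general (n : ℕ)
    (G : SimpleGraph (Fin (n + 1))) [DecidableRel G.Adj]
    (hconn : G.Connected) (hacyc : G.IsAcyclic) :
    (Matrix.of fun i j : Fin n =>
        (if i = j then (G.degree i.castSucc : ℚ)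
          else if G.Adj i.castSucc j.castSucc then -1 else 0)) *
      (Matrix.of fun i j : Fin n =>
        ((G.dist (Fin.last n) i.castSucc : ℚ) + (G.dist (Fin.last n) j.castSucc : ℚ)
            - (G.dist i.castSucc j.castSucc : ℚ)) / 2) = 1 := by
  have hG : G.IsTree := ⟨hconn, hacyc⟩
  rw [← G.submatrix_lapMatrix ℚ (Fin.castSucc_injective n)]
  change _ * (Matrix.of (G.gromovProduct ℚ (Fin.last n))).submatrix Fin.castSucc Fin.castSucc = 1
  rw [Matrix.submatrix_castSucc_mul_submatrix_castSucc _ _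
    (fun j => by simp [SimpleGraph.gromovProduct])]
  ext i j
  rw [Matrix.submatrix_apply, hG.lapMatrix_mul_gromovProduct_apply,
    if_neg (Fin.castSucc_ne_last i)]
  simp [Matrix.one_apply, Fin.castSucc_inj]

/-- For a tree `T` on `{0, …, n}` with `n` a leaf, the inverse of the
Laplacian minor at `n` has `(i,j)` entry `(d(n,i) + d(n,j) − d(i,j))/2`, the
distance from `n` to the path connecting `i` and `j`. -/
theorem tree_laplacian_minor_inverse (n : ℕ) (hn : 1 ≤ n)
    (G : SimpleGraph (Fin (n + 1))) [DecidableRel G.Adj]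
    (hconn : G.Connected) (hacyc : G.IsAcyclic)
    (hleaf : G.degree (Fin.last n) = 1) :
    (Matrix.of fun i j : Fin n =>
        (if i = j then (G.degree i.castSucc : ℚ)
          else if G.Adj i.castSucc j.castSucc then -1 else 0)) *
      (Matrix.of fun i j : Fin n =>
        ((G.dist (Fin.last n) i.castSucc : ℚ) + (G.dist (Fin.last n) j.castSucc : ℚ)
            - (G.dist i.castSucc j.castSucc : ℚ)) / 2) = 1 :=
  tree_laplacian_minor_inverse_general n G hconn hacyc
end

section
/- Let n ≥ 3 and let c ∈ ℤ^{n−1} be a vector whose entries satisfy 0 ≤ cⱼ ≤ n−1 for all j. Let x = L_{n,cyc}⁻¹·c ∈ ℚ^{n−1}. If the first coordinate x₁ is an integer, then every coordinate x_k (1 ≤ k ≤ n−1) is an integer. -/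
/-! Subtracting `k + 1` times the first row of `L⁻¹` from its `k`-th row (0-based) leaves the
integer vector with entries `j - k` for `j < k` and `0` otherwise: the denominators `n` cancel.
Hence `x_k - (k + 1) x_0` is an integer combination of the `c_j`. -/

/-- The inverse of the Laplacian minor of the `n`-cycle:
`b_{i,j} = i(n−j)/n` for `i ≤ j` and `j(n−i)/n` for `i > j`, where the index
`i : Fin (n-1)` represents the vertex `i+1 ∈ {1, …, n−1}`. -/
def cycleLaplacianMinorInv (n : ℕ) : Matrix (Fin (n - 1)) (Fin (n - 1)) ℚ :=
  Matrix.of fun i j =>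
    if i.val ≤ j.val then ((i.val : ℚ) + 1) * ((n : ℚ) - ((j.val : ℚ) + 1)) / (n : ℚ)
    else ((j.val : ℚ) + 1) * ((n : ℚ) - ((i.val : ℚ) + 1)) / (n : ℚ)

open Matrix

lemma cycleLaplacianMinorInv_apply_eq {n : ℕ} (h : 0 < n - 1) (k j : Fin (n - 1)) :
    cycleLaplacianMinorInv n k j =
      ((k : ℚ) + 1) * cycleLaplacianMinorInv n ⟨0, h⟩ j +
        if j < k then (j : ℚ) - k else 0 := by
  have hn : (n : ℚ) ≠ 0 := by exact_mod_cast (show n ≠ 0 by omega)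
  simp only [cycleLaplacianMinorInv, of_apply, Fin.lt_def, zero_le, if_true]
  rcases lt_or_ge j.val k.val with hjk | hkj
  · rw [if_neg (by omega), if_pos hjk]
    field_simp
    ring
  · rw [if_pos hkj, if_neg (by omega)]
    field_simp
    ring

lemma cycleLaplacianMinorInv_mulVec_apply {n : ℕ} (h : 0 < n - 1) (v : Fin (n - 1) → ℚ)
    (k : Fin (n - 1)) :
    (cycleLaplacianMinorInv n *ᵥ v) k =
      ((k : ℚ) + 1) * (cycleLaplacianMinorInv n *ᵥ v) ⟨0, h⟩ +
        ∑ j, (if j < k then (j : ℚ) - k else 0) * v j := by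
  simp only [mulVec, dotProduct, cycleLaplacianMinorInv_apply_eq h k, add_mul,
    Finset.sum_add_distrib, Finset.mul_sum, mul_assoc]

/-- If `c ∈ ℤ^{n−1}` has entries in `{0, …, n−1}` and
`x = L_{n,cyc}⁻¹·c` has integral first coordinate, then `x` is integral. -/
theorem cycle_fpp_integrality (n : ℕ) (hn : 3 ≤ n)
    (c : Fin (n - 1) → ℤ)
    (h1 : ∃ z : ℤ,
      (cycleLaplacianMinorInv n).mulVec (fun j => (c j : ℚ)) ⟨0, by omega⟩ = (z : ℚ)) :
    ∀ k : Fin (n - 1), ∃ z : ℤ,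
      (cycleLaplacianMinorInv n).mulVec (fun j => (c j : ℚ)) k = (z : ℚ) := by
  obtain ⟨z, hz⟩ := h1
  intro k
  refine ⟨((k : ℤ) + 1) * z + ∑ j, (if j < k then (j : ℤ) - k else 0) * c j, ?_⟩
  rw [cycleLaplacianMinorInv_mulVec_apply (by omega), hz]
  push_cast [apply_ite (Int.cast : ℤ → ℚ)]
  rfl
end

section
/- Let n ≥ 3. The map λ ↦ L_{n,cyc}·λ is a bijection from the set of integer vectors {λ ∈ ℤ^{n−1} : L_{n,cyc}·λ ≥ 0 componentwise} onto the set {d ∈ ℕ^{n−1} : n divides Σ_{j=1}^{n−1} (n−j)·dⱼ}. (This is the bijective form of the multivariate integer point transform identity σ_{K_n}(z) = (Σ_{c ∈ S_n} z^{L⁻¹c·n})/∏ⱼ(1 − z^{n·(L⁻¹)ⱼ}), where S_n is the set of solutions to Σ_{j=1}^{n−1}(n−j)cⱼ ≡ 0 (mod n) with cⱼ ∈ {0, 1, …, n−1}.) -/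
/-!
On the vertices `1, …, n−1`, the matrix `G a b = n·min(a, b) − a·b` is `n·L⁻¹`: as a function
of `a` it vanishes at `a = 0` and `a = n` and is piecewise linear with a single kink at `a = b`,
where its second difference is `−n`. So `L` is injective, and `d` has the preimage `G·d / n`
exactly when `n ∣ G·d`. Since `G a b ≡ a·(n − b) (mod n)`, the whole vector `G·d` is divisible
by `n` as soon as its first entry `∑ⱼ (n − j)·dⱼ` is; conversely that first entry is
`(G·L·λ)₁ = n·λ₁` when `d = L·λ`.
-/

/-- The Laplacian minor of the `n`-cycle over `ℤ`: the `(n−1)×(n−1)` tridiagonal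
matrix with `2` on the diagonal and `−1` on the off-diagonals.  Index
`i : Fin (n-1)` represents the vertex `i+1 ∈ {1, …, n−1}`. -/
def cycleLaplacianMinorZ (n : ℕ) : Matrix (Fin (n - 1)) (Fin (n - 1)) ℤ :=
  Matrix.of fun i j =>
    if i = j then 2 else if i.val + 1 = j.val ∨ j.val + 1 = i.val then -1 else 0

open Matrix

def pathGreen (N a b : ℤ) : ℤ := N * min a b - a * b

theorem pathGreen_second_difference (N a b : ℤ) :
    2 * pathGreen N (a + 1) b - pathGreen N a b - pathGreen N (a + 2) b =
      if a + 1 = b then N else 0 := by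
  unfold pathGreen
  rcases lt_trichotomy (a + 1) b with h | rfl | h
  · rw [min_eq_left (by omega), min_eq_left (by omega), min_eq_left (by omega), if_neg h.ne]
    ring
  · rw [min_eq_left le_rfl, min_eq_left (by omega), min_eq_right (by omega), if_pos rfl]
    ring
  · rw [min_eq_right h.le, min_eq_right (by omega), min_eq_right (by omega), if_neg h.ne']
    ring

theorem cycleLaplacianMinorZ_mulVec_of_boundary {n : ℕ} (f : ℕ → ℤ) (h0 : f 0 = 0)
    (hn : f n = 0) (k : Fin (n - 1)) :
    (cycleLaplacianMinorZ n *ᵥ fun j => f (j + 1)) k = 2 * f (k + 1) - f k - f (k + 2) := by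
  have hk := k.isLt
  have hsum : (cycleLaplacianMinorZ n *ᵥ fun j => f (j + 1)) k =
      ∑ m ∈ Finset.range (n + 1),
        ((if m = k + 1 then 2 * f m else 0) - (if m = k then f m else 0) -
          (if m = k + 2 then f m else 0)) := by
    obtain ⟨m, rfl⟩ : ∃ m, n = m + 1 := ⟨n - 1, by omega⟩
    rw [Finset.sum_range_succ, Finset.sum_range_succ', h0, hn]
    simp only [mulVec, dotProduct, cycleLaplacianMinorZ, of_apply, Fin.ext_iff,
      Nat.add_sub_cancel, Fin.sum_univ_eq_sum_range (fun i =>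
        (if k.val = i then 2 else if k.val + 1 = i ∨ i + 1 = k.val then -1 else 0) * f (i + 1)),
      mul_zero, ite_self, sub_zero, add_zero]
    refine Finset.sum_congr rfl fun i _ => ?_
    split_ifs <;> omega
  rw [hsum, Finset.sum_sub_distrib, Finset.sum_sub_distrib, Finset.sum_ite_eq',
    Finset.sum_ite_eq', Finset.sum_ite_eq', if_pos (Finset.mem_range.mpr (by omega)),
    if_pos (Finset.mem_range.mpr (by omega)), if_pos (Finset.mem_range.mpr (by omega))]

def cycleGreenMatrix (n : ℕ) : Matrix (Fin (n - 1)) (Fin (n - 1)) ℤ :=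
  Matrix.of fun i j => pathGreen n (i + 1) (j + 1)

theorem cycleLaplacianMinorZ_isSymm (n : ℕ) : (cycleLaplacianMinorZ n).IsSymm := by
  ext i j
  simp only [transpose_apply, cycleLaplacianMinorZ, of_apply, eq_comm (a := i), or_comm]

theorem cycleGreenMatrix_isSymm (n : ℕ) : (cycleGreenMatrix n).IsSymm := by
  ext i j
  simp only [transpose_apply, cycleGreenMatrix, of_apply, pathGreen, min_comm, mul_comm]

theorem cycleLaplacianMinorZ_mul_cycleGreenMatrix (n : ℕ) :
    cycleLaplacianMinorZ n * cycleGreenMatrix n = (n : ℤ) • 1 := by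
  ext k i
  have hi := i.isLt
  have hcolumn := cycleLaplacianMinorZ_mulVec_of_boundary (fun a => pathGreen n a (i + 1))
    (by rw [pathGreen, min_eq_left (by omega)]; ring)
    (by rw [pathGreen, min_eq_right (by omega)]; ring) k
  push_cast at hcolumn
  change (cycleLaplacianMinorZ n *ᵥ fun j => cycleGreenMatrix n j i) k = _
  simp only [cycleGreenMatrix, of_apply, hcolumn, pathGreen_second_difference, add_left_inj,
    Nat.cast_inj, ← Fin.ext_iff, Matrix.smul_apply, one_apply, smul_eq_mul, mul_ite, mul_one,
    mul_zero]

theorem cycleGreenMatrix_mul_cycleLaplacianMinorZ (n : ℕ) :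
    cycleGreenMatrix n * cycleLaplacianMinorZ n = (n : ℤ) • 1 := by
  have := congrArg transpose (cycleLaplacianMinorZ_mul_cycleGreenMatrix n)
  rwa [transpose_mul, (cycleLaplacianMinorZ_isSymm n).eq, (cycleGreenMatrix_isSymm n).eq,
    transpose_smul, transpose_one] at this

theorem cycleGreenMatrix_mulVec_cycleLaplacianMinorZ_mulVec (n : ℕ) (v : Fin (n - 1) → ℤ) :
    cycleGreenMatrix n *ᵥ (cycleLaplacianMinorZ n *ᵥ v) = (n : ℤ) • v := by
  rw [mulVec_mulVec, cycleGreenMatrix_mul_cycleLaplacianMinorZ, smul_mulVec, one_mulVec]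

theorem cycleLaplacianMinorZ_mulVec_cycleGreenMatrix_mulVec (n : ℕ) (v : Fin (n - 1) → ℤ) :
    cycleLaplacianMinorZ n *ᵥ (cycleGreenMatrix n *ᵥ v) = (n : ℤ) • v := by
  rw [mulVec_mulVec, cycleLaplacianMinorZ_mul_cycleGreenMatrix, smul_mulVec, one_mulVec]

theorem cycleLaplacianMinorZ_mulVec_injective {n : ℕ} (hn : n ≠ 0) :
    Function.Injective (cycleLaplacianMinorZ n *ᵥ ·) := by
  intro u v huv
  apply smul_right_injective _ (Nat.cast_ne_zero.mpr hn : (n : ℤ) ≠ 0)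
  simp only [← cycleGreenMatrix_mulVec_cycleLaplacianMinorZ_mulVec, huv]

theorem cycleGreenMatrix_mulVec_apply (n : ℕ) (d : Fin (n - 1) → ℤ) (i : Fin (n - 1)) :
    (cycleGreenMatrix n *ᵥ d) i =
      n * ∑ j : Fin (n - 1), (min ((i : ℤ) + 1) ((j : ℤ) + 1) - ((i : ℤ) + 1)) * d j +
        ((i : ℤ) + 1) * ∑ j : Fin (n - 1), ((n : ℤ) - ((j : ℤ) + 1)) * d j := by
  simp only [mulVec, dotProduct, cycleGreenMatrix, of_apply, pathGreen, Finset.mul_sum,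
    ← Finset.sum_add_distrib]
  exact Finset.sum_congr rfl fun j _ => by ring

theorem dvd_cycleGreenMatrix_mulVec {n : ℕ} {d : Fin (n - 1) → ℤ}
    (hd : (n : ℤ) ∣ ∑ j : Fin (n - 1), ((n : ℤ) - ((j : ℤ) + 1)) * d j) (i : Fin (n - 1)) :
    (n : ℤ) ∣ (cycleGreenMatrix n *ᵥ d) i := by
  rw [cycleGreenMatrix_mulVec_apply]
  exact dvd_add (dvd_mul_right _ _) (dvd_mul_of_dvd_right hd _)

theorem cycleGreenMatrix_mulVec_zero {n : ℕ} (h : 0 < n - 1) (d : Fin (n - 1) → ℤ) :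
    (cycleGreenMatrix n *ᵥ d) ⟨0, h⟩ = ∑ j : Fin (n - 1), ((n : ℤ) - ((j : ℤ) + 1)) * d j := by
  rw [cycleGreenMatrix_mulVec_apply]
  simp

theorem exists_cycleLaplacianMinorZ_mulVec_eq {n : ℕ} (hn : n ≠ 0) {d : Fin (n - 1) → ℤ}
    (hd : (n : ℤ) ∣ ∑ j : Fin (n - 1), ((n : ℤ) - ((j : ℤ) + 1)) * d j) :
    ∃ lam, cycleLaplacianMinorZ n *ᵥ lam = d := by
  choose lam hlam using dvd_cycleGreenMatrix_mulVec hd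
  refine ⟨lam, smul_right_injective _ (Nat.cast_ne_zero.mpr hn : (n : ℤ) ≠ 0) ?_⟩
  have : (n : ℤ) • lam = cycleGreenMatrix n *ᵥ d := funext fun i => (hlam i).symm
  simp only [← mulVec_smul, this, cycleLaplacianMinorZ_mulVec_cycleGreenMatrix_mulVec]

/-- `λ ↦ L_{n,cyc}·λ` is a bijection from the integer points of the
cone `{λ : L_{n,cyc}·λ ≥ 0}` onto `{d ∈ ℕ^{n−1} : n ∣ Σ_{j=1}^{n−1} (n−j)·dⱼ}`. -/
theorem cycle_cone_bijection (n : ℕ) (hn : 3 ≤ n) :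
    Set.BijOn (fun lam : Fin (n - 1) → ℤ => (cycleLaplacianMinorZ n).mulVec lam)
      {lam : Fin (n - 1) → ℤ | ∀ i, 0 ≤ (cycleLaplacianMinorZ n).mulVec lam i}
      {d : Fin (n - 1) → ℤ | (∀ j, 0 ≤ d j) ∧
        (n : ℤ) ∣ ∑ j : Fin (n - 1), ((n : ℤ) - ((j.val : ℤ) + 1)) * d j} := by
  have hn0 : n ≠ 0 := by omega
  have h0 : 0 < n - 1 := by omega
  refine ⟨fun lam hlam => ⟨hlam, lam ⟨0, h0⟩, ?_⟩,
    (cycleLaplacianMinorZ_mulVec_injective hn0).injOn, fun d ⟨hd0, hd⟩ => ?_⟩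
  · rw [← cycleGreenMatrix_mulVec_zero h0, cycleGreenMatrix_mulVec_cycleLaplacianMinorZ_mulVec]
    rfl
  · obtain ⟨lam, rfl⟩ := exists_cycleLaplacianMinorZ_mulVec_eq hn0 hd
    exact ⟨lam, hd0, rfl⟩
end

section
/- Let n ≥ 3 and let Lₙ be the n×n Laplacian minor of the leafed n-cycle. Let c ∈ ℤⁿ be a vector whose entries satisfy 0 ≤ cⱼ ≤ n−1 for all j, and let x = Lₙ⁻¹·c ∈ ℚⁿ with coordinates x₀, x₁, …, x_{n−1}. If x₁ is an integer, then every coordinate of x is an integer. -/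
/-!
Every entry of the inverse is `b_{i,j} = min(i,j) + 1 - ij/n`, so for an integral vector `c`
the coordinate `x_k` differs from an integer by `k · q` with `q = (∑ⱼ j cⱼ) / n` independent
of `k`. Integrality of `x₁` forces `q ∈ ℤ`, and then every `x_k` is integral.
-/

/-- The inverse of the Laplacian minor (at the leaf) of the leafed `n`-cycle:
`b_{i,j} = i(n−j)/n + 1` if `i ≤ j` and `j(n−i)/n + 1` if `i > j`, `0 ≤ i,j ≤ n−1`. -/
def leafedCycleLaplacianMinorInv (n : ℕ) : Matrix (Fin n) (Fin n) ℚ :=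
  Matrix.of fun i j =>
    if i.val ≤ j.val then (i.val : ℚ) * ((n : ℚ) - (j.val : ℚ)) / (n : ℚ) + 1
    else (j.val : ℚ) * ((n : ℚ) - (i.val : ℚ)) / (n : ℚ) + 1

lemma leafedCycleLaplacianMinorInv_apply {n : ℕ} (i j : Fin n) :
    leafedCycleLaplacianMinorInv n i j = ((min i.val j.val : ℕ) : ℚ) + 1 - i * j / n := by
  have hn : (n : ℚ) ≠ 0 := Nat.cast_ne_zero.mpr (Fin.pos i).ne'
  rw [leafedCycleLaplacianMinorInv, Matrix.of_apply]
  split_ifs with hij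
  · rw [min_eq_left hij]
    field_simp
    ring
  · rw [min_eq_right (Nat.le_of_not_le hij)]
    field_simp
    ring

lemma leafedCycleLaplacianMinorInv_mulVec_apply {n : ℕ} (v : Fin n → ℚ) (k : Fin n) :
    (leafedCycleLaplacianMinorInv n).mulVec v k =
      ∑ j, (((min k.val j.val : ℕ) : ℚ) + 1) * v j - k * ((∑ j : Fin n, (j : ℚ) * v j) / n) := by
  simp only [Matrix.mulVec, dotProduct, leafedCycleLaplacianMinorInv_apply, sub_mul,
    Finset.sum_sub_distrib, Finset.mul_sum, Finset.sum_div]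
  congr 1
  refine Finset.sum_congr rfl fun j _ => ?_
  ring

/-- If `c ∈ ℤⁿ` has entries in `{0, …, n−1}` and `x = Lₙ⁻¹·c` has
integral coordinate `x₁`, then every coordinate of `x` is integral. -/
theorem leafed_cycle_fpp_integrality (n : ℕ) (hn : 3 ≤ n)
    (c : Fin n → ℤ)
    (h1 : ∃ z : ℤ,
      (leafedCycleLaplacianMinorInv n).mulVec (fun j => (c j : ℚ)) ⟨1, by omega⟩ = (z : ℚ)) :
    ∀ k : Fin n, ∃ z : ℤ,
      (leafedCycleLaplacianMinorInv n).mulVec (fun j => (c j : ℚ)) k = (z : ℚ) := by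
  set a : Fin n → ℤ := fun k => ∑ j, ((min k.val j.val : ℕ) + 1 : ℤ) * c j
  set q : ℚ := (∑ j : Fin n, (j : ℚ) * c j) / n
  have hx : ∀ k : Fin n,
      (leafedCycleLaplacianMinorInv n).mulVec (fun j => (c j : ℚ)) k = a k - k * q := by
    intro k
    rw [leafedCycleLaplacianMinorInv_mulVec_apply]
    push_cast [a]
    rfl
  obtain ⟨z, hz⟩ := h1
  have hq : q = ((a ⟨1, by omega⟩ - z : ℤ) : ℚ) := by
    rw [hx] at hz
    push_cast at hz ⊢
    linarith
  intro k
  exact ⟨a k - k * (a ⟨1, by omega⟩ - z), by rw [hx k, hq]; push_cast; ring⟩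
end

section
/- Let n ≥ 3 and let Lₙ be the n×n Laplacian minor of the leafed n-cycle. For every natural number m, the number of integer vectors λ = (λ₀, …, λ_{n−1}) ∈ ℤⁿ satisfying Lₙ·λ ≥ 0 componentwise and λ₀ = m equals the number of vectors d = (d₀, …, d_{n−1}) ∈ ℕⁿ with d₀ + d₁ + ⋯ + d_{n−1} = m such that n divides Σ_{j=1}^{n−1} (n−j)·dⱼ. (Equivalently, the generating function σ(q) = Σ_λ q^{λ₀}, summed over integer points of the cone Lₙ·λ ≥ 0, equals (Σ_{c ∈ Sₙ} q^{φ(c)})/(1−qⁿ)ⁿ, where Sₙ is the set of c ∈ {0,…,n−1}ⁿ with Σ_{j=1}^{n−1}(n−j)cⱼ ≡ 0 (mod n) and φ(c) = Σⱼ cⱼ.) -/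
/-!
The map `λ ↦ Lₙ λ` is injective: if `Lₙ μ = 0`, the column sums of `Lₙ` (which vanish except
for column `0`, where they are `1`) give `μ₀ = 0`, and rows `1, …, n - 1` force `μ` to be an
arithmetic progression around the cycle, which must then vanish. The same column sums give
`∑ (Lₙ λ) = λ₀`, and since the weight `j mod n` is affine along the cycle and vanishes at vertex
`0`, the only row carrying the leaf term, `∑ j (Lₙ λ)ⱼ ≡ 0 (mod n)`. Conversely every `d ∈ ℕⁿ` satisfying both constraints is
`Lₙ λ` for `λₖ = ∑ d + k G(n) / n - G(k)`, where `G(k) = ∑ⱼ (k - j)₊ dⱼ` is a discrete second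
antiderivative of `d`. So `λ ↦ Lₙ λ` is a bijection between the two counted sets.
-/

/-- The Laplacian minor (at the leaf) of the leafed `n`-cycle, over `ℤ`:
`(Lₙ)₀₀ = 3`, diagonal `2` elsewhere, `−1` between cyclically adjacent vertices. -/
def leafedCycleLaplacianMinor (n : ℕ) : Matrix (Fin n) (Fin n) ℤ :=
  Matrix.of fun i j =>
    if i = j then (if i.val = 0 then 3 else 2)
    else if i.val + 1 = j.val ∨ j.val + 1 = i.val ∨
        (i.val = 0 ∧ j.val = n - 1) ∨ (j.val = 0 ∧ i.val = n - 1) then -1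
    else 0

open Finset Matrix

variable {n : ℕ}

theorem Fin.val_add_one_eq_ite [NeZero n] (i : Fin n) :
    (i + 1).val = if i.val + 1 = n then 0 else i.val + 1 := by
  obtain ⟨k, rfl⟩ := Nat.exists_eq_succ_of_ne_zero (NeZero.ne n)
  rw [Fin.val_add_one]
  simp [Fin.ext_iff]

theorem Fin.val_sub_one_eq_ite [NeZero n] (i : Fin n) :
    (i - 1).val = if i = 0 then n - 1 else i.val - 1 := by
  obtain ⟨k, rfl⟩ := Nat.exists_eq_succ_of_ne_zero (NeZero.ne n)
  rw [Fin.coe_sub_one]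
  simp

theorem Fin.natCast_val_add_zmod (i j : Fin n) :
    (((i + j : Fin n) : ℕ) : ZMod n) = (i : ℕ) + (j : ℕ) := by
  rw [Fin.val_add, ZMod.natCast_mod, Nat.cast_add]

theorem Fin.natCast_val_sub_zmod [NeZero n] (i j : Fin n) :
    (((i - j : Fin n) : ℕ) : ZMod n) = (i : ℕ) - (j : ℕ) :=
  eq_sub_of_add_eq (by rw [← Fin.natCast_val_add_zmod, sub_add_cancel])

section LaplacianMinor

variable [NeZero n]

theorem leafedCycleLaplacianMinor_apply (hn : 3 ≤ n) (i j : Fin n) :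
    leafedCycleLaplacianMinor n i j =
      (if i = j then (if i = 0 then 3 else 2) else 0) -
        (if i - 1 = j then 1 else 0) - (if i + 1 = j then 1 else 0) := by
  simp only [leafedCycleLaplacianMinor, Matrix.of_apply, sub_eq_iff_eq_add, Fin.ext_iff,
    Fin.val_add_one_eq_ite, Fin.val_zero]
  split_ifs <;> omega

theorem leafedCycleLaplacianMinor_mulVec_apply (hn : 3 ≤ n) (v : Fin n → ℤ) (i : Fin n) :
    (leafedCycleLaplacianMinor n *ᵥ v) i =
      2 * v i - v (i - 1) - v (i + 1) + if i = 0 then v i else 0 := by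
  simp only [mulVec, dotProduct, leafedCycleLaplacianMinor_apply hn, sub_mul, ite_mul,
    zero_mul, one_mul, sum_sub_distrib, sum_ite_eq, mem_univ, if_true]
  split_ifs <;> ring

theorem sum_leafedCycleLaplacianMinor_mulVec (hn : 3 ≤ n) (v : Fin n → ℤ) :
    ∑ i, (leafedCycleLaplacianMinor n *ᵥ v) i = v 0 := by
  have hprev : ∑ i, v (i - 1) = ∑ i, v i := Equiv.sum_comp (Equiv.subRight 1) v
  have hnext : ∑ i, v (i + 1) = ∑ i, v i := Equiv.sum_comp (Equiv.addRight 1) v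
  simp only [leafedCycleLaplacianMinor_mulVec_apply hn, sum_add_distrib, sum_sub_distrib,
    ← mul_sum, hprev, hnext, sum_ite_eq', mem_univ, if_true]
  ring

theorem sum_natCast_val_mul_leafedCycleLaplacianMinor_mulVec (hn : 3 ≤ n) (v : Fin n → ℤ) :
    ∑ i : Fin n, ((i : ℕ) : ZMod n) * ((leafedCycleLaplacianMinor n *ᵥ v) i : ZMod n) = 0 := by
  have hprev : ∑ i : Fin n, ((i : ℕ) : ZMod n) * (v (i - 1) : ZMod n) =
      ∑ i : Fin n, (((i : ℕ) : ZMod n) + 1) * (v i : ZMod n) := by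
    rw [← Equiv.sum_comp (Equiv.addRight 1)]
    simp [Fin.natCast_val_add_zmod, ZMod.natCast_mod]
  have hnext : ∑ i : Fin n, ((i : ℕ) : ZMod n) * (v (i + 1) : ZMod n) =
      ∑ i : Fin n, (((i : ℕ) : ZMod n) - 1) * (v i : ZMod n) := by
    rw [← Equiv.sum_comp (Equiv.subRight 1)]
    simp [Fin.natCast_val_sub_zmod, ZMod.natCast_mod]
  simp only [leafedCycleLaplacianMinor_mulVec_apply hn, Int.cast_add, Int.cast_sub, Int.cast_mul,
    Int.cast_ofNat, apply_ite (Int.cast : ℤ → ZMod n), Int.cast_zero, mul_add, mul_sub,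
    sum_add_distrib, sum_sub_distrib, hprev, hnext, mul_ite, mul_zero, sum_ite_eq', mem_univ,
    if_true, Fin.val_zero, Nat.cast_zero, zero_mul, add_zero, add_mul, sub_mul, one_mul,
    mul_left_comm _ (2 : ZMod n), ← mul_sum]
  ring

theorem dvd_sum_mul_leafedCycleLaplacianMinor_mulVec (hn : 3 ≤ n) (v : Fin n → ℤ) :
    (n : ℤ) ∣ ∑ i : Fin n, ((n : ℤ) - i.val) * (leafedCycleLaplacianMinor n *ᵥ v) i := by
  rw [← ZMod.intCast_zmod_eq_zero_iff_dvd]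
  push_cast
  simp [sum_natCast_val_mul_leafedCycleLaplacianMinor_mulVec hn]

open Fin.NatCast in
theorem eq_zero_of_leafedCycleLaplacianMinor_mulVec_eq_zero (hn : 3 ≤ n) {v : Fin n → ℤ}
    (hv : leafedCycleLaplacianMinor n *ᵥ v = 0) : v = 0 := by
  have hrow (i : Fin n) := leafedCycleLaplacianMinor_mulVec_apply hn v i
  have h0 : v 0 = 0 := by simpa [hv] using (sum_leafedCycleLaplacianMinor_mulVec hn v).symm
  -- rows `1, …, n - 1` make `v` an arithmetic progression along `0, 1, …, n`, and `n = 0` in `Fin n`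
  have hprog : ∀ k, k + 1 ≤ n → v k = k * v 1 ∧ v (k + 1 : ℕ) = (k + 1) * v 1 := by
    intro k
    induction k with
    | zero => intro; simp [h0]
    | succ k ih =>
      intro hk
      obtain ⟨hk0, hk1⟩ := ih (by omega)
      refine ⟨by exact_mod_cast hk1, ?_⟩
      have hne : ((k + 1 : ℕ) : Fin n) ≠ 0 := by
        rw [Ne, Fin.natCast_eq_zero]; exact Nat.not_dvd_of_pos_of_lt (by omega) (by omega)
      have hrowk := hrow ((k + 1 : ℕ) : Fin n)
      rw [if_neg hne, hv, Pi.zero_apply] at hrowk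
      simp only [Nat.cast_succ, add_sub_cancel_right] at hrowk hk1 ⊢
      linear_combination hrowk + 2 * hk1 - hk0
  obtain ⟨-, hvn⟩ := hprog (n - 1) (by omega)
  rw [Nat.sub_add_cancel (by omega), Fin.natCast_self, h0, ← Nat.cast_add_one,
    Nat.sub_add_cancel (by omega)] at hvn
  have h1 : v 1 = 0 := (mul_eq_zero.1 hvn.symm).resolve_left (by exact_mod_cast NeZero.ne n)
  ext i
  simpa [h1] using (hprog i (by omega)).1

end LaplacianMinor

section RampSum

variable (d : Fin n → ℕ)

/-- With truncated subtraction, `rampSum d` is a discrete second antiderivative of `d`. -/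
def rampSum (k : ℕ) : ℕ := ∑ j, (k - j.val) * d j

theorem rampSum_zero : rampSum d 0 = 0 := by simp [rampSum]

theorem rampSum_succ_add_rampSum_pred (i : Fin n) :
    rampSum d (i + 1) + rampSum d (i - 1) = 2 * rampSum d i + d i := by
  have hcoef (j : Fin n) :
      (i + 1 - j.val) + (i - 1 - j.val) = 2 * (i - j.val) + if j = i then 1 else 0 := by
    split_ifs with h
    · subst h; omega
    · have := Fin.val_ne_of_ne h; omega
  calc rampSum d (i + 1) + rampSum d (i - 1)
      = ∑ j, (2 * (i - j.val) + if j = i then 1 else 0) * d j := by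
        rw [rampSum, rampSum, ← sum_add_distrib]
        exact sum_congr rfl fun j _ => by rw [← add_mul, hcoef]
    _ = 2 * rampSum d i + d i := by
        simp [rampSum, add_mul, sum_add_distrib, mul_sum, mul_assoc]

theorem rampSum_self [NeZero n] : rampSum d n = rampSum d (n - 1) + ∑ j, d j := by
  rw [rampSum, rampSum, ← sum_add_distrib]
  exact sum_congr rfl fun j _ => by
    rw [show n - j.val = (n - 1 - j.val) + 1 by omega, add_one_mul]

theorem rampSum_self_eq_sum_filter_add [NeZero n] :
    rampSum d n = ∑ j ∈ univ.filter (fun j : Fin n => 0 < j.val), (n - j.val) * d j + n * d 0 := by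
  rw [rampSum, ← sum_filter_add_sum_filter_not univ (fun j : Fin n => 0 < j.val)]
  congr 1
  rw [show univ.filter (fun j : Fin n => ¬ 0 < j.val) = {0} by ext j; simp]
  simp

/-- The slope `rampSum d n / n` is chosen so that the sequence returns to `∑ d` at index `n`,
which makes the two wrap-around rows of `Lₙ` come out right. -/
def leafedCyclePreimage : Fin n → ℤ :=
  fun i => (∑ j, d j : ℕ) + i.val * (rampSum d n / n : ℕ) - rampSum d i

theorem leafedCycleLaplacianMinor_mulVec_preimage [NeZero n] (hn : 3 ≤ n)
    (hd : n ∣ rampSum d n) :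
    leafedCycleLaplacianMinor n *ᵥ leafedCyclePreimage d = fun i => (d i : ℤ) := by
  obtain ⟨a, ha⟩ := hd
  have hq : rampSum d n / n = a := by rw [ha, Nat.mul_div_cancel_left _ (NeZero.pos n)]
  ext i
  have hnext : leafedCyclePreimage d (i + 1) =
      (∑ j, d j : ℕ) + (i.val + 1 : ℕ) * a - rampSum d (i + 1) := by
    simp only [leafedCyclePreimage, hq, Fin.val_add_one_eq_ite]
    split_ifs with h
    · rw [h, ha, rampSum_zero]; push_cast; ring
    · rfl
  have hsucc : (rampSum d (i + 1) : ℤ) + rampSum d (i - 1) = 2 * rampSum d i + d i := by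
    exact_mod_cast rampSum_succ_add_rampSum_pred d i
  rw [leafedCycleLaplacianMinor_mulVec_apply hn, hnext]
  simp only [leafedCyclePreimage, hq, Fin.val_sub_one_eq_ite]
  split_ifs with h0
  · subst h0
    have hlast : (n * a : ℤ) = rampSum d (n - 1) + ∑ j, (d j : ℤ) := by
      exact_mod_cast ha ▸ rampSum_self d
    simp only [Fin.val_zero, zero_add, zero_tsub, rampSum_zero] at hsucc ⊢
    push_cast [Nat.cast_sub (R := ℤ) (NeZero.one_le : 1 ≤ n)]
    linear_combination hsucc - hlast
  · have h1 : 1 ≤ i.val := Nat.one_le_iff_ne_zero.2 (Fin.val_ne_zero_iff.2 h0)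
    push_cast [Nat.cast_sub (R := ℤ) h1]
    linear_combination hsucc

end RampSum

section Counting

variable [NeZero n]

theorem injOn_toNat_leafedCycleLaplacianMinor_mulVec (hn : 3 ≤ n) :
    Set.InjOn (fun v i => ((leafedCycleLaplacianMinor n *ᵥ v) i).toNat)
      {v | ∀ i, 0 ≤ (leafedCycleLaplacianMinor n *ᵥ v) i} := by
  intro v hv w hw hvw
  rw [← sub_eq_zero]
  refine eq_zero_of_leafedCycleLaplacianMinor_mulVec_eq_zero hn ?_
  ext i
  have hi := congrFun hvw i
  simp only at hi
  rw [mulVec_sub, Pi.sub_apply, Pi.zero_apply, sub_eq_zero, ← Int.toNat_of_nonneg (hv i),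
    ← Int.toNat_of_nonneg (hw i), hi]

theorem image_toNat_leafedCycleLaplacianMinor_mulVec (hn : 3 ≤ n) (m : ℕ) :
    (fun v i => ((leafedCycleLaplacianMinor n *ᵥ v) i).toNat) ''
        {v | (∀ i, 0 ≤ (leafedCycleLaplacianMinor n *ᵥ v) i) ∧ v 0 = m} =
      {d | ∑ j, d j = m ∧ n ∣ rampSum d n} := by
  ext d
  constructor
  · rintro ⟨v, ⟨hv, hv0⟩, rfl⟩
    have hcast (i : Fin n) : ((((leafedCycleLaplacianMinor n *ᵥ v) i).toNat : ℕ) : ℤ) =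
        (leafedCycleLaplacianMinor n *ᵥ v) i := Int.toNat_of_nonneg (hv i)
    constructor
    · have hsum : ((∑ j, ((leafedCycleLaplacianMinor n *ᵥ v) j).toNat : ℕ) : ℤ) = m := by
        push_cast [hcast]
        rw [sum_leafedCycleLaplacianMinor_mulVec hn, hv0]
      exact_mod_cast hsum
    · rw [← Int.natCast_dvd_natCast, rampSum]
      have hweight (j : Fin n) : ((n - j.val : ℕ) : ℤ) = n - j.val := Nat.cast_sub j.isLt.le
      push_cast [hcast, hweight]
      exact dvd_sum_mul_leafedCycleLaplacianMinor_mulVec hn v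
  · rintro ⟨hsum, hd⟩
    have hpre := leafedCycleLaplacianMinor_mulVec_preimage d hn hd
    refine ⟨leafedCyclePreimage d, ⟨fun i => by simp [hpre], ?_⟩, by simp [hpre]⟩
    simp [leafedCyclePreimage, rampSum_zero, hsum]

end Counting

/-- The number of integer points `λ` of the leafed `n`-cycle cone with
`λ₀ = m` equals the number of `d ∈ ℕⁿ` with `Σ d = m` and
`n ∣ Σ_{j=1}^{n−1} (n−j)·dⱼ`. -/
theorem leafed_cycle_generating_function (n : ℕ) (hn : 3 ≤ n) (m : ℕ) :
    {lam : Fin n → ℤ |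
        (∀ i, 0 ≤ (leafedCycleLaplacianMinor n).mulVec lam i) ∧
        lam ⟨0, by omega⟩ = (m : ℤ)}.ncard =
      {d : Fin n → ℕ | (∑ j, d j = m) ∧
        n ∣ ∑ j ∈ Finset.univ.filter (fun j : Fin n => 0 < j.val),
          (n - j.val) * d j}.ncard := by
  have : NeZero n := ⟨by omega⟩
  have hcounts : {d : Fin n → ℕ | (∑ j, d j = m) ∧
      n ∣ ∑ j ∈ Finset.univ.filter (fun j : Fin n => 0 < j.val), (n - j.val) * d j} =
      {d | ∑ j, d j = m ∧ n ∣ rampSum d n} :=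
    Set.ext fun d => and_congr_right fun _ => by
      rw [rampSum_self_eq_sum_filter_add, Nat.dvd_add_left (dvd_mul_right _ _)]
  rw [hcounts, ← image_toNat_leafedCycleLaplacianMinor_mulVec hn m,
    ((injOn_toNat_leafedCycleLaplacianMinor_mulVec hn).mono fun _ hv => hv.1).ncard_image]
  rfl
end
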